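/- arXiv:0907.0877 — 6 statements merged into one kernel-verified Lean document; each statement's English description precedes it below -/
import Mathlib

section
/- If K and L are prefix languages over a linearly ordered alphabet such that (K, <ₗ) and (L, <ₗ) are well-ordered, then (KL, <ₗ) is well-ordered and its order type equals o(L) · o(K) (the product of the order type of L by the order type of K, in that order). -/
/-!
Because `K` is a prefix language, every word of `KL` factors uniquely as `uv` with `u ∈ K`,
`v ∈ L`, and two distinct words of `K` first differ at a letter, so that this letter decides the
comparison of `u₁v₁` with `u₂v₂` whatever `v₁, v₂` are. Hence `(u, v) ↦ uv` is an order
isomorphism from the lexicographic product `K ×ₗ L` onto `KL`, whose order type is `o(L) · o(K)`.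
-/

/-- The branching (strict) order on words: `u <ₛ v` iff they have a common
prefix followed by letters `a < b`. -/
def BranchLT {A : Type*} [LinearOrder A] (u v : List A) : Prop :=
  ∃ (w : List A) (a b : A) (u' v' : List A),
    a < b ∧ u = w ++ a :: u' ∧ v = w ++ b :: v'

/-- The proper-prefix order on words. -/
def PrefLT {A : Type*} [LinearOrder A] (u v : List A) : Prop :=
  u <+: v ∧ u ≠ v

/-- The lexicographic order: proper prefix or branching. -/
def WordLex {A : Type*} [LinearOrder A] (u v : List A) : Prop :=
  PrefLT u v ∨ BranchLT u v

/-- A prefix language: no member is a proper prefix of another member. -/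
def IsPrefixLang {A : Type*} [LinearOrder A] (L : Set (List A)) : Prop :=
  ∀ u ∈ L, ∀ v : List A, u ++ v ∈ L → v = []

/-- The lexicographic order restricted to a set of words. -/
def subLex {A : Type*} [LinearOrder A] (L : Set (List A)) : ↥L → ↥L → Prop :=
  fun a b => WordLex a.1 b.1

/-- Elementwise concatenation of two languages. -/
def LangConcat {A : Type*} (K L : Set (List A)) : Set (List A) :=
  { w | ∃ u ∈ K, ∃ v ∈ L, w = u ++ v }

/-- `n`-fold concatenation power of a language. -/
def LangPow {A : Type*} (L : Set (List A)) : ℕ → Set (List A)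
  | 0 => {[]}
  | n + 1 => LangConcat L (LangPow L n)

section WordLex

variable {A : Type*} [LinearOrder A]

theorem wordLex_iff_lex {u v : List A} : WordLex u v ↔ List.Lex (· < ·) u v := by
  constructor
  · rintro (⟨⟨t, rfl⟩, hne⟩ | ⟨w, a, b, u', v', hab, rfl, rfl⟩)
    · cases t with
      | nil => simp at hne
      | cons c t =>
        induction u with
        | nil => exact List.Lex.nil
        | cons x u ih => exact List.Lex.cons (ih (by simp))
    · exact List.Lex.append_left _ (List.Lex.rel hab) w
  · intro h
    induction h with
    | nil => exact Or.inl ⟨⟨_, rfl⟩, by simp⟩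
    | @cons a l₁ l₂ h ih =>
      rcases ih with ⟨⟨t, rfl⟩, hne⟩ | ⟨w, x, y, u', v', hxy, rfl, rfl⟩
      · exact Or.inl ⟨⟨t, rfl⟩, by simpa using hne⟩
      · exact Or.inr ⟨a :: w, x, y, u', v', hxy, rfl, rfl⟩
    | @rel a l₁ b l₂ h => exact Or.inr ⟨[], a, b, l₁, l₂, h, rfl, rfl⟩

theorem wordLex_asymm {u v : List A} (h : WordLex u v) : ¬ WordLex v u := by
  rw [wordLex_iff_lex] at h ⊢
  exact asymm h

theorem wordLex_trichotomous (u v : List A) : WordLex u v ∨ u = v ∨ WordLex v u := by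
  simp only [wordLex_iff_lex]
  exact trichotomous_of _ u v

theorem wordLex_append_left_iff (u : List A) {v₁ v₂ : List A} :
    WordLex (u ++ v₁) (u ++ v₂) ↔ WordLex v₁ v₂ := by
  simp only [wordLex_iff_lex]
  induction u with
  | nil => rfl
  | cons a u ih => rw [List.cons_append, List.cons_append, List.lex_cons_iff, ih]

theorem BranchLT.append {u₁ u₂ : List A} (h : BranchLT u₁ u₂) (v₁ v₂ : List A) :
    BranchLT (u₁ ++ v₁) (u₂ ++ v₂) := by
  obtain ⟨w, a, b, u', v', hab, rfl, rfl⟩ := h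
  exact ⟨w, a, b, u' ++ v₁, v' ++ v₂, hab, by simp, by simp⟩

end WordLex

namespace IsPrefixLang

variable {A : Type*} [LinearOrder A] {K : Set (List A)}

theorem eq_of_append_eq_append (hK : IsPrefixLang K) {u₁ u₂ v₁ v₂ : List A}
    (h₁ : u₁ ∈ K) (h₂ : u₂ ∈ K) (h : u₁ ++ v₁ = u₂ ++ v₂) : u₁ = u₂ := by
  rcases List.prefix_or_prefix_of_prefix (List.prefix_append u₁ v₁)
    (h ▸ List.prefix_append u₂ v₂) with ⟨t, rfl⟩ | ⟨t, rfl⟩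
  · rw [hK u₁ h₁ t h₂, List.append_nil]
  · rw [hK u₂ h₂ t h₁, List.append_nil]

theorem branchLT_of_wordLex (hK : IsPrefixLang K) {u₁ u₂ : List A}
    (h₁ : u₁ ∈ K) (h₂ : u₂ ∈ K) (h : WordLex u₁ u₂) : BranchLT u₁ u₂ := by
  rcases h with ⟨⟨t, rfl⟩, hne⟩ | hb
  · exact absurd (by rw [hK u₁ h₁ t h₂, List.append_nil]) hne
  · exact hb

theorem wordLex_append_iff (hK : IsPrefixLang K) {u₁ u₂ : List A}
    (h₁ : u₁ ∈ K) (h₂ : u₂ ∈ K) (v₁ v₂ : List A) :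
    WordLex (u₁ ++ v₁) (u₂ ++ v₂) ↔ WordLex u₁ u₂ ∨ u₁ = u₂ ∧ WordLex v₁ v₂ := by
  constructor
  · intro h
    rcases wordLex_trichotomous u₁ u₂ with hu | rfl | hu
    · exact Or.inl hu
    · exact Or.inr ⟨rfl, (wordLex_append_left_iff u₁).1 h⟩
    · exact absurd (Or.inr ((hK.branchLT_of_wordLex h₂ h₁ hu).append v₂ v₁))
        (wordLex_asymm h)
  · rintro (hu | ⟨rfl, hv⟩)
    · exact Or.inr ((hK.branchLT_of_wordLex h₁ h₂ hu).append v₁ v₂)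
    · exact (wordLex_append_left_iff u₁).2 hv

noncomputable def concatEquiv (hK : IsPrefixLang K) (L : Set (List A)) :
    K × L ≃ LangConcat K L :=
  Equiv.ofBijective (fun p => ⟨p.1.1 ++ p.2.1, p.1.1, p.1.2, p.2.1, p.2.2, rfl⟩) <| by
    constructor
    · rintro ⟨⟨u₁, h₁⟩, ⟨v₁, _⟩⟩ ⟨⟨u₂, h₂⟩, ⟨v₂, _⟩⟩ he
      have he : u₁ ++ v₁ = u₂ ++ v₂ := congrArg Subtype.val he
      obtain rfl := hK.eq_of_append_eq_append h₁ h₂ he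
      obtain rfl := List.append_cancel_left he
      rfl
    · rintro ⟨_, u, hu, v, hv, rfl⟩
      exact ⟨⟨⟨u, hu⟩, ⟨v, hv⟩⟩, rfl⟩

noncomputable def concatRelIso (hK : IsPrefixLang K) (L : Set (List A)) :
    Prod.Lex (subLex K) (subLex L) ≃r subLex (LangConcat K L) where
  toEquiv := hK.concatEquiv L
  map_rel_iff' {p q} := by
    rw [Prod.lex_def]
    exact (hK.wordLex_append_iff p.1.2 q.1.2 p.2.1 q.2.1).trans (or_congr Iff.rfl
      (and_congr_left' Subtype.ext_iff.symm))

end IsPrefixLang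

theorem stmt5_general {A : Type*} [LinearOrder A] (K L : Set (List A))
    (hK : IsPrefixLang K)
    (wK : IsWellOrder ↥K (subLex K)) (wL : IsWellOrder ↥L (subLex L)) :
    ∃ w : IsWellOrder ↥(LangConcat K L) (subLex (LangConcat K L)),
      @Ordinal.type _ _ w = @Ordinal.type _ _ wL * @Ordinal.type _ _ wK := by
  let e := hK.concatRelIso L
  have wo := e.symm.toRelEmbedding.isWellOrder
  refine ⟨wo, ?_⟩
  rw [← Ordinal.type_prod_lex]
  exact e.ordinalType_congr.symm

/-- If `K` and `L` are prefix languages that are well-ordered by the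
lexicographic order, then so is `KL`, and `o(KL) = o(L) * o(K)`. -/
theorem stmt5 {A : Type*} [LinearOrder A] (K L : Set (List A))
    (hK : IsPrefixLang K) (hL : IsPrefixLang L)
    (wK : IsWellOrder ↥K (subLex K)) (wL : IsWellOrder ↥L (subLex L)) :
    ∃ w : IsWellOrder ↥(LangConcat K L) (subLex (LangConcat K L)),
      @Ordinal.type _ _ w = @Ordinal.type _ _ wL * @Ordinal.type _ _ wK :=
  stmt5_general K L hK wK wL
end

section
/- Let L ⊆ {0,1}* be a prefix language such that (L, <ₗ) is well-ordered with order type α > 1. Then the language L∞ = ⋃_{n ≥ 0} 1ⁿ0Lⁿ (all words 1ⁿ0u with u ∈ Lⁿ) is a prefix language, (L∞, <ₗ) is well-ordered, and its order type is α^ω. -/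
/-!
Since `L` is a prefix language, `(u, v) ↦ uv` is an order isomorphism `L ×ₗ K ≃ LK` for any `K`,
so `Lⁿ` has order type `αⁿ`. The marker `1ⁿ0` makes `L∞` order-isomorphic to the ordered sum
`Σₙ Lⁿ`. That sum contains a copy of every `Lⁿ`, and `⟨n, u⟩ ↦ αⁿ + (rank of u in Lⁿ)` is
strictly monotone with values below `αⁿ⁺¹` (as `αⁿ + αⁿ = αⁿ·2 ≤ αⁿ⁺¹` for `α ≥ 2`), so the type
of the sum is `sup αⁿ = α^ω`.
-/

open Ordinal

section WordLex

variable {A : Type*} [LinearOrder A]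

theorem wordLex_iff_lt {u v : List A} : WordLex u v ↔ u < v := by
  change _ ↔ List.Lex (· < ·) u v
  constructor
  · rintro (⟨⟨t, rfl⟩, hne⟩ | ⟨w, a, b, u', v', hab, rfl, rfl⟩)
    · obtain _ | ⟨c, t⟩ := t
      · simp at hne
      · simpa using (List.Lex.nil : List.Lex (· < ·) [] (c :: t)).append_left _ u
    · exact (List.Lex.rel hab).append_left _ w
  · intro h
    induction h with
    | nil => exact Or.inl ⟨⟨_, rfl⟩, by simp⟩
    | @rel a l₁ b l₂ h => exact Or.inr ⟨[], a, b, l₁, l₂, h, rfl, rfl⟩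
    | @cons a l₁ l₂ h ih =>
      rcases ih with ⟨⟨t, rfl⟩, hne⟩ | ⟨w, x, y, u', v', hxy, rfl, rfl⟩
      · exact Or.inl ⟨⟨t, rfl⟩, by simpa using hne⟩
      · exact Or.inr ⟨a :: w, x, y, u', v', hxy, rfl, rfl⟩

theorem append_lt_append_of_lt_of_not_prefix {u₁ u₂ : List A} (h : u₁ < u₂) (hp : ¬u₁ <+: u₂)
    (v₁ v₂ : List A) : u₁ ++ v₁ < u₂ ++ v₂ := by
  induction h with
  | nil => exact absurd List.nil_prefix hp
  | rel h => exact List.Lex.rel h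
  | cons _ ih => exact List.Lex.cons (ih fun h => hp (List.cons_prefix_cons.2 ⟨rfl, h⟩))

end WordLex

theorem subLex_eq_lt {A : Type*} [LinearOrder A] (S : Set (List A)) : subLex S = (· < ·) := by
  ext x y
  exact wordLex_iff_lt

section PrefixLang

variable {A : Type*} [LinearOrder A] {L : Set (List A)} {u₁ u₂ v₁ v₂ : List A}

theorem IsPrefixLang.eq_of_prefix (hL : IsPrefixLang L) (h₁ : u₁ ∈ L) (h₂ : u₂ ∈ L)
    (h : u₁ <+: u₂) : u₁ = u₂ := by
  obtain ⟨t, rfl⟩ := h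
  rw [hL u₁ h₁ t h₂, List.append_nil]

theorem IsPrefixLang.append_inj (hL : IsPrefixLang L) (h₁ : u₁ ∈ L) (h₂ : u₂ ∈ L)
    (h : u₁ ++ v₁ = u₂ ++ v₂) : u₁ = u₂ ∧ v₁ = v₂ := by
  have hu : u₁ = u₂ := by
    rcases List.append_eq_append_iff.1 h with ⟨t, rfl, -⟩ | ⟨t, rfl, -⟩
    · exact hL.eq_of_prefix h₁ h₂ (List.prefix_append _ _)
    · exact (hL.eq_of_prefix h₂ h₁ (List.prefix_append _ _)).symm
  subst hu
  exact ⟨rfl, List.append_cancel_left h⟩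

theorem IsPrefixLang.langConcat {K : Set (List A)} (hL : IsPrefixLang L) (hK : IsPrefixLang K) :
    IsPrefixLang (LangConcat L K) := by
  rintro _ ⟨u, hu, v, hv, rfl⟩ t ⟨u', hu', v', hv', he⟩
  rw [List.append_assoc] at he
  obtain ⟨rfl, rfl⟩ := hL.append_inj hu hu' he
  exact hK v hv t hv'

theorem IsPrefixLang.langPow (hL : IsPrefixLang L) : ∀ n, IsPrefixLang (LangPow L n)
  | 0 => by
    rintro _ rfl v hv
    simpa [LangPow] using hv
  | n + 1 => hL.langConcat (hL.langPow n)

theorem IsPrefixLang.append_lt_append_iff (hL : IsPrefixLang L) (h₁ : u₁ ∈ L) (h₂ : u₂ ∈ L) :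
    u₁ ++ v₁ < u₂ ++ v₂ ↔ u₁ < u₂ ∨ u₁ = u₂ ∧ v₁ < v₂ := by
  have of_lt : ∀ {u₁ u₂ : List A} (v₁ v₂ : List A), u₁ ∈ L → u₂ ∈ L → u₁ < u₂ →
      u₁ ++ v₁ < u₂ ++ v₂ := fun v₁ v₂ h₁ h₂ h =>
    append_lt_append_of_lt_of_not_prefix h (fun hp => h.ne (hL.eq_of_prefix h₁ h₂ hp)) v₁ v₂
  have append_mono : StrictMono (u₁ ++ ·) := fun _ _ => List.append_left_lt
  constructor
  · intro h
    rcases lt_trichotomy u₁ u₂ with hu | rfl | hu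
    · exact Or.inl hu
    · exact Or.inr ⟨rfl, append_mono.lt_iff_lt.1 h⟩
    · exact absurd h (of_lt v₂ v₁ h₂ h₁ hu).not_gt
  · rintro (hu | ⟨rfl, hv⟩)
    · exact of_lt v₁ v₂ h₁ h₂ hu
    · exact append_mono hv

noncomputable def IsPrefixLang.concatRelIso_s6 (hL : IsPrefixLang L) (K : Set (List A)) :
    Prod.Lex (subLex L) (subLex K) ≃r subLex (LangConcat L K) where
  toEquiv := Equiv.ofBijective (fun p => ⟨p.1.1 ++ p.2.1, p.1.1, p.1.2, p.2.1, p.2.2, rfl⟩) <| by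
    constructor
    · intro p q h
      obtain ⟨hu, hv⟩ := hL.append_inj p.1.2 q.1.2 (congrArg Subtype.val h)
      exact Prod.ext (Subtype.ext hu) (Subtype.ext hv)
    · rintro ⟨_, u, hu, v, hv, rfl⟩
      exact ⟨(⟨u, hu⟩, ⟨v, hv⟩), rfl⟩
  map_rel_iff' := by
    rintro ⟨⟨u₁, h₁⟩, ⟨v₁, -⟩⟩ ⟨⟨u₂, h₂⟩, ⟨v₂, -⟩⟩
    simp only [subLex_eq_lt, Prod.lex_def, Subtype.mk_lt_mk, Subtype.mk.injEq]
    exact hL.append_lt_append_iff h₁ h₂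

theorem IsPrefixLang.isWellOrder_langPow (hL : IsPrefixLang L) [IsWellOrder L (subLex L)] :
    ∀ n, IsWellOrder (LangPow L n) (subLex (LangPow L n))
  | 0 => by
    have : Finite (LangPow L 0) := Set.finite_singleton ([] : List A)
    rw [subLex_eq_lt]
    exact isWellOrder_lt
  | n + 1 =>
    have := hL.isWellOrder_langPow n
    (hL.concatRelIso_s6 _).symm.toRelEmbedding.isWellOrder

theorem IsPrefixLang.type_langPow (hL : IsPrefixLang L) [IsWellOrder L (subLex L)] :
    ∀ n, @type _ _ (hL.isWellOrder_langPow n) = type (subLex L) ^ n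
  | 0 => by
    have : Unique (LangPow L 0) := Set.uniqueSingleton []
    rw [pow_zero]
    exact @type_eq_one_of_unique _ _ (hL.isWellOrder_langPow 0) _ _
  | n + 1 => by
    have := hL.isWellOrder_langPow n
    rw [← @RelIso.ordinalType_congr _ _ _ _ _ (hL.isWellOrder_langPow (n + 1)) (hL.concatRelIso_s6 _),
      type_prod_lex, hL.type_langPow n, pow_succ]

end PrefixLang

instance Sigma.Lex.isWellOrder {ι : Type*} {α : ι → Type*} {r : ι → ι → Prop}
    {s : ∀ i, α i → α i → Prop} [IsWellOrder ι r] [∀ i, IsWellOrder (α i) (s i)] :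
    IsWellOrder (Σ i, α i) (Sigma.Lex r s) where
  wf := by
    refine Subrelation.wf (r := InvImage (PSigma.Lex r s) fun a => ⟨a.1, a.2⟩) ?_
      (InvImage.wf _ (WellFounded.psigma_lex IsWellFounded.wf fun _ => IsWellFounded.wf))
    rintro _ _ (⟨a, b, h⟩ | ⟨a, b, h⟩)
    exacts [PSigma.Lex.left _ _ h, PSigma.Lex.right _ h]

universe u

namespace Ordinal

theorem type_le_of_bounded_rank {β : Type*} {r : β → β → Prop} [IsWellOrder β r] {c : Ordinal}
    (f : β → Ordinal) (hf : ∀ a b, r a b → f a < f b) (hc : ∀ b, f b < c) : type r ≤ c := by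
  rw [← type_toType c]
  refine type_le_iff'.2 ⟨RelEmbedding.ofMonotone
    (fun b => enum (α := c.ToType) (· < ·) ⟨f b, by rw [type_toType]; exact hc b⟩) ?_⟩
  exact fun a b h => enum_lt_enum.2 (Subtype.mk_lt_mk.2 (hf a b h))

theorem pow_add_lt_pow_succ {α β : Ordinal} (hα : 1 < α) {n : ℕ} (hβ : β < α ^ n) :
    α ^ n + β < α ^ (n + 1) :=
  calc α ^ n + β < α ^ n + α ^ n := add_lt_add_right hβ _
    _ = α ^ n * 2 := by rw [← one_add_one_eq_two, mul_add, mul_one]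
    _ ≤ α ^ n * α := mul_le_mul_right (one_add_one_eq_two (R := Ordinal) ▸ Order.succ_le_of_lt hα) _
    _ = α ^ (n + 1) := (pow_succ _ _).symm

variable {β : ℕ → Type u} {s : ∀ n, β n → β n → Prop} [∀ n, IsWellOrder (β n) (s n)]
  {α : Ordinal.{u}}

theorem sigmaLex_rank_lt (hα : 1 < α) (hs : ∀ n, type (s n) = α ^ n) {p q : Σ n, β n}
    (h : Sigma.Lex (· < ·) s p q) :
    α ^ p.1 + typein (s p.1) p.2 < α ^ q.1 + typein (s q.1) q.2 := by
  rcases h with ⟨a, b, hij⟩ | ⟨a, b, hab⟩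
  · calc _ < α ^ (_ + 1) := pow_add_lt_pow_succ hα (hs _ ▸ typein_lt_type _ a)
      _ ≤ α ^ _ := pow_le_pow_right' hα.le hij
      _ ≤ _ := le_self_add
  · exact add_lt_add_right ((typein_lt_typein _).2 hab) _

theorem type_sigmaLex_nat_eq_opow_omega0 (hα : 1 < α) (hs : ∀ n, type (s n) = α ^ n) :
    type (Sigma.Lex (α := β) (· < ·) s) = α ^ ω := by
  refine le_antisymm (type_le_of_bounded_rank _ (fun _ _ => sigmaLex_rank_lt hα hs) ?_) ?_
  · rintro ⟨n, x⟩
    calc _ < α ^ (n + 1) := pow_add_lt_pow_succ hα (hs n ▸ typein_lt_type _ x)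
      _ < α ^ ω := by
        rw [← opow_natCast]
        exact (opow_lt_opow_iff_right hα).2 (natCast_lt_omega0 _)
  · rw [← iSup_pow_natCast (zero_lt_one.trans hα)]
    refine Ordinal.iSup_le fun n => hs n ▸ (RelEmbedding.ofMonotone (Sigma.mk n) fun a b h =>
      Sigma.Lex.right a b h).ordinal_type_le

end Ordinal

theorem replicate_append_cons_inj {A : Type*} {a b : A} (hab : a ≠ b) {n m : ℕ} {x y : List A}
    (h : List.replicate n b ++ a :: x = List.replicate m b ++ a :: y) : n = m ∧ x = y := by
  induction n generalizing m with
  | zero => cases m <;> simp_all [List.replicate_succ]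
  | succ n ih =>
    cases m with
    | zero => simp [List.replicate_succ, hab.symm] at h
    | succ m =>
      obtain ⟨rfl, rfl⟩ := ih (by simpa [List.replicate_succ] using h)
      exact ⟨rfl, rfl⟩

section Replicate

variable {A : Type*} [LinearOrder A] {a b : A}

theorem replicate_append_cons_lt (hab : a < b) {n m : ℕ} (h : n < m) (x y : List A) :
    List.replicate n b ++ a :: x < List.replicate m b ++ a :: y := by
  obtain ⟨k, rfl⟩ := Nat.exists_eq_add_of_lt h
  rw [add_assoc, List.replicate_add, List.replicate_succ, List.append_assoc, List.cons_append]
  exact List.append_left_lt (List.Lex.rel hab)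

theorem replicate_append_cons_lt_iff {n : ℕ} {x y : List A} :
    List.replicate n b ++ a :: x < List.replicate n b ++ a :: y ↔ x < y := by
  simpa using (StrictMono.lt_iff_lt (f := (List.replicate n b ++ [a] ++ ·))
    fun _ _ => List.append_left_lt)

end Replicate

def markedUnion (K : ℕ → Set (List Bool)) : Set (List Bool) :=
  {w | ∃ n, ∃ u ∈ K n, w = List.replicate n true ++ false :: u}

theorem isPrefixLang_markedUnion {K : ℕ → Set (List Bool)} (hK : ∀ n, IsPrefixLang (K n)) :
    IsPrefixLang (markedUnion K) := by
  rintro _ ⟨n, u, hu, rfl⟩ v ⟨m, u', hu', he⟩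
  rw [List.append_assoc, List.cons_append] at he
  obtain ⟨rfl, rfl⟩ := replicate_append_cons_inj Bool.false_ne_true he
  exact hK n u hu v hu'

noncomputable def markedUnionRelIso (K : ℕ → Set (List Bool)) :
    Sigma.Lex (· < ·) (fun n => subLex (K n)) ≃r subLex (markedUnion K) where
  toEquiv := Equiv.ofBijective
    (fun p => ⟨List.replicate p.1 true ++ false :: p.2.1, p.1, p.2.1, p.2.2, rfl⟩) <| by
    constructor
    · rintro ⟨n, u, hu⟩ ⟨m, v, hv⟩ h
      obtain ⟨rfl, rfl⟩ := replicate_append_cons_inj Bool.false_ne_true (congrArg Subtype.val h)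
      rfl
    · rintro ⟨_, n, u, hu, rfl⟩
      exact ⟨⟨n, u, hu⟩, rfl⟩
  map_rel_iff' := by
    rintro ⟨n, u, hu⟩ ⟨m, v, hv⟩
    change WordLex _ _ ↔ _
    rw [wordLex_iff_lt, Sigma.lex_iff]
    rcases lt_trichotomy n m with h | rfl | h
    · exact iff_of_true (replicate_append_cons_lt Bool.false_lt_true h u v) (Or.inl h)
    · simp only [lt_irrefl, false_or, exists_const]
      exact replicate_append_cons_lt_iff.trans wordLex_iff_lt.symm
    · refine iff_of_false (replicate_append_cons_lt Bool.false_lt_true h v u).not_gt ?_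
      rintro (h' | ⟨h', -⟩)
      exacts [lt_asymm h h', h.ne' h']

/-- If `L ⊆ {0,1}*` is a prefix language well-ordered by `<ₗ` with order type
`α > 1`, then `L∞ = ⋃ₙ 1ⁿ0Lⁿ` is a prefix language, well-ordered by `<ₗ`,
with order type `α ^ ω`. Here `0 = false`, `1 = true`. -/
theorem stmt6 (L : Set (List Bool)) (hL : IsPrefixLang L)
    (wL : IsWellOrder ↥L (subLex L))
    (hα : 1 < @Ordinal.type _ _ wL) :
    IsPrefixLang {w : List Bool | ∃ n : ℕ, ∃ u ∈ LangPow L n,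
        w = List.replicate n true ++ false :: u} ∧
    ∃ w : IsWellOrder
        ↥{w : List Bool | ∃ n : ℕ, ∃ u ∈ LangPow L n,
            w = List.replicate n true ++ false :: u}
        (subLex _),
      @Ordinal.type _ _ w = (@Ordinal.type _ _ wL) ^ Ordinal.omega0 := by
  have := hL.isWellOrder_langPow
  let φ := markedUnionRelIso (LangPow L)
  have := φ.symm.toRelEmbedding.isWellOrder
  exact ⟨isPrefixLang_markedUnion hL.langPow, this,
    φ.ordinalType_congr.symm.trans (Ordinal.type_sigmaLex_nat_eq_opow_omega0 hα hL.type_langPow)⟩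
end

section
/- If L ⊆ {0,1}* and (L, <ₗ) is not well-ordered, then there exists an infinite sequence (uₙ) of words in L such that u_{n+1} <ₛ uₙ for all n, i.e., an infinite strictly descending chain in the branching order. -/
/-!
A `<ₗ`-descending chain in `L` is a mix of proper-prefix steps and branching steps. Prefix
steps shorten the word, so every element of `L` is `<ₗ`-accessible once it is `<ₛ`-accessible:
below a fixed `u`, the prefixes of `u` are handled by induction on length, and anything
branching off a prefix of `u` also branches off `u` itself. Hence if `<ₛ` were well founded
on `L` then so would be `<ₗ`.
-/

variable {A : Type*} [LinearOrder A]

theorem BranchLT.of_isPrefix {u v w : List A} (h : BranchLT u v) (hvw : v <+: w) :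
    BranchLT u w := by
  obtain ⟨p, a, b, u', v', hab, rfl, rfl⟩ := h
  obtain ⟨t, rfl⟩ := hvw
  exact ⟨p, a, b, u', v' ++ t, hab, rfl, by simp⟩

theorem PrefLT.length_lt {u v : List A} (h : PrefLT u v) : u.length < v.length :=
  lt_of_le_of_ne h.1.length_le fun hlen => h.2 (h.1.eq_of_length hlen)

theorem Set.WellFoundedOn.wordLex_of_branchLT {L : Set (List A)}
    (h : L.WellFoundedOn BranchLT) : L.WellFoundedOn WordLex := by
  refine ⟨fun u => ?_⟩
  induction u using WellFounded.induction h with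
  | h u ihBranch =>
    suffices ∀ n, ∀ v : L, v.1.length = n → v.1 <+: u.1 → Acc (Subrel WordLex (· ∈ L)) v from
      this _ u rfl List.prefix_rfl
    intro n
    induction n using Nat.strong_induction_on with
    | h n ihLength =>
      rintro v rfl hvu
      refine ⟨_, fun w hwv => ?_⟩
      rcases hwv with hpref | hbranch
      · exact ihLength _ hpref.length_lt w rfl (hpref.1.trans hvu)
      · exact ihBranch w (hbranch.of_isPrefix hvu)

/-- If `L ⊆ {0,1}*` is not well-ordered by the lexicographic order, then
there is an infinite strictly descending chain in the branching order. -/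
theorem stmt7 (L : Set (List Bool))
    (h : ¬ L.WellFoundedOn (WordLex : List Bool → List Bool → Prop)) :
    ∃ u : ℕ → List Bool, (∀ n, u n ∈ L) ∧ ∀ n, BranchLT (u (n + 1)) (u n) := by
  have hB : ¬ L.WellFoundedOn BranchLT := fun hB => h hB.wordLex_of_branchLT
  rw [Set.WellFoundedOn, wellFounded_iff_isEmpty_descending_chain, not_isEmpty_iff] at hB
  obtain ⟨f, hf⟩ := hB
  exact ⟨fun n => (f n).1, fun n => (f n).2, hf⟩
end

section
/- Every set C of ordinals containing 0 and 1 that is closed under ordinal sum, ordinal product, and the ω-power operation α ↦ α^ω contains every ordinal less than ω^(ω^ω). -/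
/-!
Every natural number is a sum of ones, and `ω = 2 ^ ω`. If `C` contains `b` and every ordinal
below `b`, then division with remainder writes each `a < b ^ (n + 1)` as `b ^ n * q + r` with
`q < b` and `r < b ^ n`, so `C` contains everything below `b ^ ω = sup bⁿ`, and `b ^ ω` itself.
Starting from `b = ω` this reaches every `ω ^ ω ^ n`, and these are cofinal in `ω ^ ω ^ ω`.
-/

open Ordinal Set

structure IsAddMulClosed (C : Set Ordinal) : Prop where
  zero_mem : 0 ∈ C
  one_mem : 1 ∈ C
  add_mem : ∀ a ∈ C, ∀ b ∈ C, a + b ∈ C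
  mul_mem : ∀ a ∈ C, ∀ b ∈ C, a * b ∈ C

theorem Ordinal.exists_lt_pow_of_lt_opow_omega0 {a b : Ordinal} (h : a < b ^ ω) :
    ∃ n : ℕ, a < b ^ n := by
  rcases eq_or_ne b 0 with rfl | hb
  · simp [zero_opow omega0_ne_zero] at h
  obtain ⟨c, hc, hac⟩ := (lt_opow_of_isSuccLimit hb isSuccLimit_omega0).1 h
  obtain ⟨n, rfl⟩ := lt_omega0.1 hc
  exact ⟨n, by rwa [opow_natCast] at hac⟩

theorem Ordinal.exists_lt_omega0_opow_omega0_opow_natCast {a : Ordinal}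
    (h : a < ω ^ ω ^ ω) : ∃ n : ℕ, a < ω ^ ω ^ (n : Ordinal) := by
  obtain ⟨c, hc, hac⟩ := (lt_opow_of_isSuccLimit omega0_ne_zero
    (isSuccLimit_opow_left isSuccLimit_omega0 omega0_ne_zero)).1 h
  obtain ⟨n, hcn⟩ := exists_lt_pow_of_lt_opow_omega0 hc
  rw [← opow_natCast] at hcn
  exact ⟨n, hac.trans ((opow_lt_opow_iff_right one_lt_omega0).2 hcn)⟩

theorem Ordinal.omega0_opow_omega0_opow_natCast_succ (n : ℕ) :
    ω ^ ω ^ ((n + 1 : ℕ) : Ordinal) = (ω ^ ω ^ (n : Ordinal)) ^ ω := by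
  rw [← opow_mul, Nat.cast_succ, opow_add_one]

namespace IsAddMulClosed

variable {C : Set Ordinal}

theorem natCast_mem (hC : IsAddMulClosed C) (n : ℕ) : (n : Ordinal) ∈ C := by
  induction n with
  | zero => simpa using hC.zero_mem
  | succ n ih => exact_mod_cast hC.add_mem _ ih _ hC.one_mem

theorem Iio_omega0_subset (hC : IsAddMulClosed C) : Iio ω ⊆ C := by
  intro a ha
  obtain ⟨n, rfl⟩ := lt_omega0.1 ha
  exact hC.natCast_mem n

theorem pow_mem (hC : IsAddMulClosed C) {b : Ordinal} (hb : b ∈ C) (n : ℕ) : b ^ n ∈ C := by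
  induction n with
  | zero => simpa using hC.one_mem
  | succ n ih => rw [pow_succ]; exact hC.mul_mem _ ih _ hb

theorem Iio_pow_subset (hC : IsAddMulClosed C) {b : Ordinal} (hb : b ∈ C) (hlt : Iio b ⊆ C)
    (n : ℕ) : Iio (b ^ n) ⊆ C := by
  induction n with
  | zero =>
    intro a ha
    rw [pow_zero, mem_Iio, Order.lt_one_iff] at ha
    exact ha ▸ hC.zero_mem
  | succ n ih =>
    intro a ha
    rw [mem_Iio, pow_succ] at ha
    have hbn : b ^ n ≠ 0 := left_ne_zero_of_mul (ne_bot_of_gt ha)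
    have hq : a / b ^ n < b := (lt_mul_iff_div_lt hbn).1 ha
    have hr : a % b ^ n < b ^ n := mod_lt a hbn
    rw [← div_add_mod a (b ^ n)]
    exact hC.add_mem _ (hC.mul_mem _ (hC.pow_mem hb n) _ (hlt hq)) _ (ih hr)

theorem Iio_opow_omega0_subset (hC : IsAddMulClosed C) {b : Ordinal} (hb : b ∈ C)
    (hlt : Iio b ⊆ C) : Iio (b ^ ω) ⊆ C := by
  intro a ha
  obtain ⟨n, han⟩ := exists_lt_pow_of_lt_opow_omega0 ha
  exact hC.Iio_pow_subset hb hlt n han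

end IsAddMulClosed

/-- Every set of ordinals containing `0` and `1` and closed under ordinal
sum, ordinal product, and `ω`-power contains every ordinal less than
`ω ^ ω ^ ω`. -/
theorem stmt11 (C : Set Ordinal) (h0 : (0 : Ordinal) ∈ C)
    (h1 : (1 : Ordinal) ∈ C)
    (hadd : ∀ a ∈ C, ∀ b ∈ C, a + b ∈ C)
    (hmul : ∀ a ∈ C, ∀ b ∈ C, a * b ∈ C)
    (hpow : ∀ a ∈ C, a ^ Ordinal.omega0 ∈ C) :
    ∀ α : Ordinal, α < Ordinal.omega0 ^ Ordinal.omega0 ^ Ordinal.omega0 →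
      α ∈ C := by
  have hC : IsAddMulClosed C := ⟨h0, h1, hadd, hmul⟩
  have homega0 : ω ∈ C := by
    rw [← natCast_opow_omega0 (n := 2) (by norm_num)]
    exact hpow _ (hC.natCast_mem 2)
  have htower : ∀ n : ℕ, ω ^ ω ^ (n : Ordinal) ∈ C ∧ Iio (ω ^ ω ^ (n : Ordinal)) ⊆ C := by
    intro n
    induction n with
    | zero => simpa using ⟨homega0, hC.Iio_omega0_subset⟩
    | succ n ih =>
      rw [omega0_opow_omega0_opow_natCast_succ]
      exact ⟨hpow _ ih.1, hC.Iio_opow_omega0_subset ih.1 ih.2⟩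
  intro α hα
  obtain ⟨n, hαn⟩ := exists_lt_omega0_opow_omega0_opow_natCast hα
  exact (htower n).2 hαn
end

section
/- In an ordinal grammar, if X ⇒* u·X·p and X ⇒* v·X·q with u, v terminal words and |u| ≤ |v|, then u is a prefix of v; in particular if |u| = |v| then u = v. -/
/-- A context-free grammar over the terminal alphabet `{0,1}` (= `Bool`,
with `false = 0 < 1 = true`), with nonterminals `N`. -/
structure CFG (N : Type) where
  start : N
  prods : N → Set (List (N ⊕ Bool))

/-- One derivation step: replace an occurrence of a nonterminal by the
right-hand side of one of its productions. -/
def CFG.Step {N : Type} (G : CFG N) (p q : List (N ⊕ Bool)) : Prop :=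
  ∃ (l r : List (N ⊕ Bool)) (X : N) (w : List (N ⊕ Bool)),
    p = l ++ Sum.inl X :: r ∧ w ∈ G.prods X ∧ q = l ++ w ++ r

/-- Derivation: the reflexive-transitive closure of `Step`. -/
def CFG.Derives {N : Type} (G : CFG N) : List (N ⊕ Bool) → List (N ⊕ Bool) → Prop :=
  Relation.ReflTransGen G.Step

/-- View a terminal word as a sentential form. -/
def liftWord {N : Type} (u : List Bool) : List (N ⊕ Bool) := u.map Sum.inr

/-- The language of terminal words derivable from a sentential form `q`. -/
def CFG.lang {N : Type} (G : CFG N) (q : List (N ⊕ Bool)) : Set (List Bool) :=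
  { u | G.Derives q (liftWord u) }

/-- The language of a nonterminal. -/
def CFG.langN {N : Type} (G : CFG N) (X : N) : Set (List Bool) :=
  G.lang [Sum.inl X]

/-- A nonterminal is accessible if it occurs in some sentential form
derivable from the start symbol. -/
def CFG.Accessible {N : Type} (G : CFG N) (X : N) : Prop :=
  ∃ q r : List (N ⊕ Bool), G.Derives [Sum.inl G.start] (q ++ Sum.inl X :: r)

/-! If `x <ₛ y` and `X ⇒* x·X·p`, `X ⇒* y·X·q`, then pumping the first derivation `n` times and
applying the second yields words `xⁿ·y·tₙ ∈ L(X)`. Placed in a fixed context `α·_·γ` around `X`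
(accessibility) they lie in `L(start)`, and `xⁿ⁺¹·y·tₙ₊₁ <ₛ xⁿ·y·tₙ` since they branch right after
`xⁿ`: an infinite descending chain, contradicting well-orderedness. So the two pumped words are
prefix-comparable, and their lengths decide which is the prefix. -/

section BranchLT

variable {A : Type*} [LinearOrder A]

lemma BranchLT.append_append {u v : List A} (h : BranchLT u v) (w s t : List A) :
    BranchLT (w ++ u ++ s) (w ++ v ++ t) := by
  obtain ⟨c, a, b, u', v', hab, rfl, rfl⟩ := h
  exact ⟨w ++ c, a, b, u' ++ s, v' ++ t, hab, by simp, by simp⟩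

lemma BranchLT.cons {u v : List A} (h : BranchLT u v) (a : A) : BranchLT (a :: u) (a :: v) := by
  simpa using h.append_append [a] [] []

lemma prefix_or_prefix_or_branchLT_or_branchLT (u v : List A) :
    u <+: v ∨ v <+: u ∨ BranchLT u v ∨ BranchLT v u := by
  induction u generalizing v with
  | nil => exact Or.inl List.nil_prefix
  | cons a u ih =>
    cases v with
    | nil => exact Or.inr (Or.inl List.nil_prefix)
    | cons b v =>
      rcases lt_trichotomy a b with hab | rfl | hba
      · exact Or.inr (Or.inr (Or.inl ⟨[], a, b, u, v, hab, rfl, rfl⟩))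
      · rcases ih v with h | h | h | h
        · exact Or.inl (List.cons_prefix_cons.2 ⟨rfl, h⟩)
        · exact Or.inr (Or.inl (List.cons_prefix_cons.2 ⟨rfl, h⟩))
        · exact Or.inr (Or.inr (Or.inl (h.cons a)))
        · exact Or.inr (Or.inr (Or.inr (h.cons a)))
      · exact Or.inr (Or.inr (Or.inr ⟨[], b, a, v, u, hba, rfl, rfl⟩))

end BranchLT

lemma liftWord_append {N : Type} (u v : List Bool) :
    (liftWord (u ++ v) : List (N ⊕ Bool)) = liftWord u ++ liftWord v :=
  List.map_append

namespace CFG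

variable {N : Type} {G : CFG N}

lemma Derives.refl (p : List (N ⊕ Bool)) : G.Derives p p := Relation.ReflTransGen.refl

lemma Derives.trans {p q r : List (N ⊕ Bool)} (h₁ : G.Derives p q) (h₂ : G.Derives q r) :
    G.Derives p r :=
  Relation.ReflTransGen.trans h₁ h₂

lemma Step.frame {p q : List (N ⊕ Bool)} (h : G.Step p q) (l r : List (N ⊕ Bool)) :
    G.Step (l ++ p ++ r) (l ++ q ++ r) := by
  obtain ⟨l', r', X, w, rfl, hw, rfl⟩ := h
  exact ⟨l ++ l', r' ++ r, X, w, by simp, hw, by simp⟩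

lemma Derives.frame {p q : List (N ⊕ Bool)} (h : G.Derives p q) (l r : List (N ⊕ Bool)) :
    G.Derives (l ++ p ++ r) (l ++ q ++ r) := by
  induction h with
  | refl => exact .refl _
  | tail _ hstep ih => exact Relation.ReflTransGen.tail ih (hstep.frame l r)

lemma Derives.append {p₁ q₁ p₂ q₂ : List (N ⊕ Bool)}
    (h₁ : G.Derives p₁ q₁) (h₂ : G.Derives p₂ q₂) : G.Derives (p₁ ++ p₂) (q₁ ++ q₂) := by
  have h₁' := h₁.frame [] p₂
  have h₂' := h₂.frame q₁ []
  simp only [List.nil_append, List.append_nil] at h₁' h₂'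
  exact h₁'.trans h₂'

lemma exists_derives_liftWord (hco : ∀ X : N, (G.langN X).Nonempty) (r : List (N ⊕ Bool)) :
    ∃ t : List Bool, G.Derives r (liftWord t) := by
  induction r with
  | nil => exact ⟨[], .refl _⟩
  | cons c r ih =>
    obtain ⟨t, ht⟩ := ih
    cases c with
    | inl Y =>
      obtain ⟨z, hz⟩ := hco Y
      exact ⟨z ++ t, liftWord_append z t ▸ Derives.append hz ht⟩
    | inr b => exact ⟨b :: t, Derives.append (.refl [.inr b]) ht⟩

lemma Accessible.exists_context_mem_langN_start (hco : ∀ X : N, (G.langN X).Nonempty) {X : N}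
    (hacc : G.Accessible X) :
    ∃ α γ : List Bool, ∀ s ∈ G.langN X, α ++ s ++ γ ∈ G.langN G.start := by
  obtain ⟨l, r, hlr⟩ := hacc
  obtain ⟨α, hα⟩ := exists_derives_liftWord hco l
  obtain ⟨γ, hγ⟩ := exists_derives_liftWord hco r
  refine ⟨α, γ, fun s hs => hlr.trans ?_⟩
  simpa only [CFG.lang, liftWord_append, List.append_assoc, List.singleton_append] using
    hα.append (hs.append hγ)

lemma Derives.pump {X : N} {x : List Bool} {p : List (N ⊕ Bool)}
    (hx : G.Derives [.inl X] (liftWord x ++ .inl X :: p)) (n : ℕ) :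
    ∃ P : List (N ⊕ Bool),
      G.Derives [.inl X] (liftWord (List.replicate n x).flatten ++ .inl X :: P) := by
  induction n with
  | zero => exact ⟨[], .refl _⟩
  | succ n ih =>
    obtain ⟨P, hP⟩ := ih
    refine ⟨p ++ P, hP.trans ?_⟩
    simpa only [List.replicate_succ', List.flatten_append, List.flatten_singleton,
      liftWord_append, List.append_assoc, List.singleton_append, List.cons_append,
      List.nil_append] using
      hx.frame (liftWord (List.replicate n x).flatten) P

lemma exists_pump_mem_langN (hco : ∀ X : N, (G.langN X).Nonempty) {X : N} {x y : List Bool}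
    {p q : List (N ⊕ Bool)} (hx : G.Derives [.inl X] (liftWord x ++ .inl X :: p))
    (hy : G.Derives [.inl X] (liftWord y ++ .inl X :: q)) (n : ℕ) :
    ∃ t : List Bool, (List.replicate n x).flatten ++ y ++ t ∈ G.langN X := by
  obtain ⟨P, hP⟩ := hx.pump n
  obtain ⟨t, ht⟩ := exists_derives_liftWord hco (.inl X :: q ++ P)
  have hy' := hy.frame (liftWord (List.replicate n x).flatten) P
  refine ⟨t, hP.trans ?_⟩
  simp only [List.append_assoc, List.cons_append, List.nil_append] at hy'
  refine hy'.trans ?_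
  simpa only [liftWord_append, List.append_assoc, List.cons_append] using
    (Derives.refl _).append ((Derives.refl _).append ht)

theorem not_branchLT_of_derives_self {X : N} (hacc : G.Accessible X)
    (hco : ∀ Y : N, (G.langN Y).Nonempty)
    (hwo : IsWellOrder ↥(G.langN G.start) (subLex (G.langN G.start)))
    {x y : List Bool} {p q : List (N ⊕ Bool)}
    (hx : G.Derives [.inl X] (liftWord x ++ .inl X :: p))
    (hy : G.Derives [.inl X] (liftWord y ++ .inl X :: q)) : ¬ BranchLT x y := by
  intro hxy
  obtain ⟨α, γ, hctx⟩ := hacc.exists_context_mem_langN_start hco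
  choose t ht using exists_pump_mem_langN hco hx hy
  let f : ℕ → ↥(G.langN G.start) := fun n => ⟨α ++ _ ++ γ, hctx _ (ht n)⟩
  have hdesc : ∀ n, subLex (G.langN G.start) (f (n + 1)) (f n) := fun n => by
    simpa only [f, subLex, WordLex, List.replicate_succ', List.flatten_append,
      List.flatten_singleton, List.append_assoc] using
      Or.inr (hxy.append_append (α ++ (List.replicate n x).flatten) (y ++ (t (n + 1) ++ γ))
        (t n ++ γ))
  exact (RelEmbedding.natGT f hdesc).not_wellFounded hwo.wf

theorem prefix_or_prefix_of_derives_self {X : N} (hacc : G.Accessible X)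
    (hco : ∀ Y : N, (G.langN Y).Nonempty)
    (hwo : IsWellOrder ↥(G.langN G.start) (subLex (G.langN G.start)))
    {x y : List Bool} {p q : List (N ⊕ Bool)}
    (hx : G.Derives [.inl X] (liftWord x ++ .inl X :: p))
    (hy : G.Derives [.inl X] (liftWord y ++ .inl X :: q)) : x <+: y ∨ y <+: x := by
  rcases prefix_or_prefix_or_branchLT_or_branchLT x y with h | h | h | h
  · exact .inl h
  · exact .inr h
  · exact (not_branchLT_of_derives_self hacc hco hwo hx hy h).elim
  · exact (not_branchLT_of_derives_self hacc hco hwo hy hx h).elim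

end CFG

theorem stmt15_general {N : Type} (G : CFG N)
    (hacc : ∀ X : N, G.Accessible X)
    (hco : ∀ X : N, (G.langN X).Nonempty)
    (hwo : IsWellOrder ↥(G.langN G.start) (subLex (G.langN G.start)))
    (X : N) (u v : List Bool) (p q : List (N ⊕ Bool))
    (hu : G.Derives [Sum.inl X] (liftWord u ++ Sum.inl X :: p))
    (hv : G.Derives [Sum.inl X] (liftWord v ++ Sum.inl X :: q))
    (hlen : u.length ≤ v.length) :
    u <+: v ∧ (u.length = v.length → u = v) := by
  have huv : u <+: v := by
    rcases CFG.prefix_or_prefix_of_derives_self (hacc X) hco hwo hu hv with h | h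
    · exact h
    · rw [h.eq_of_length (le_antisymm h.length_le hlen)]
  exact ⟨huv, huv.eq_of_length⟩

/-- In an ordinal grammar, if X ⇒* u·X·p and X ⇒* v·X·q with u, v terminal
words and |u| ≤ |v|, then u is a prefix of v; in particular if |u| = |v|
then u = v. -/
theorem stmt15 {N : Type} (G : CFG N)
    (hacc : ∀ X : N, G.Accessible X)
    (hco : ∀ X : N, (G.langN X).Nonempty)
    (hpre : ∀ X : N, IsPrefixLang (G.langN X))
    (htwo : ∀ X : N, ∃ u v : List Bool, u ∈ G.langN X ∧ v ∈ G.langN X ∧ u ≠ v)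
    (hwo : IsWellOrder ↥(G.langN G.start) (subLex (G.langN G.start)))
    (X : N) (u v : List Bool) (p q : List (N ⊕ Bool))
    (hu : G.Derives [Sum.inl X] (liftWord u ++ Sum.inl X :: p))
    (hv : G.Derives [Sum.inl X] (liftWord v ++ Sum.inl X :: q))
    (hlen : u.length ≤ v.length) :
    u <+: v ∧ (u.length = v.length → u = v) :=
  stmt15_general G hacc hco hwo X u v p q hu hv hlen
end

section
/- Let X be a recursive nonterminal of an ordinal grammar with pumping root u₀, and for n ≥ 0 let L(n, X) = { w ∈ L(X) : w = u₀ⁿ·x·0·y where x·1 is a prefix of u₀ }. If n < m, v ∈ L(n, X), and w ∈ L(m, X), then v <ₛ w. -/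
/-- The `n`-fold concatenation power of a word. -/
def wordPow (v : List Bool) : ℕ → List Bool
  | 0 => []
  | n + 1 => v ++ wordPow v n

/-- A primitive word: a nonempty word that is not a proper power. -/
def PrimitiveWord (w : List Bool) : Prop :=
  w ≠ [] ∧ ∀ (v : List Bool) (n : ℕ), 2 ≤ n → w ≠ wordPow v n

theorem BranchLT.of_append_singleton_prefix {A : Type*} [LinearOrder A] {p u v : List A}
    {a b : A} (hab : a < b) (h : p ++ [b] <+: v) : BranchLT (p ++ a :: u) v := by
  obtain ⟨v', rfl⟩ := h
  exact ⟨p, a, b, u, v', hab, rfl, by simp⟩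

theorem wordPow_add (u : List Bool) (a b : ℕ) :
    wordPow u (a + b) = wordPow u a ++ wordPow u b := by
  induction a with
  | zero => simp [wordPow]
  | succ a ih => rw [Nat.succ_add]; simp [wordPow, ih]

theorem wordPow_append_prefix_wordPow {u s : List Bool} {n m : ℕ} (hs : s <+: u)
    (hnm : n < m) : wordPow u n ++ s <+: wordPow u m := by
  obtain ⟨k, rfl⟩ := Nat.exists_eq_add_of_lt hnm
  rw [Nat.add_assoc, wordPow_add]
  exact (List.prefix_append_right_inj _).2 <| hs.trans (List.prefix_append _ _)

theorem stmt18_general {N : Type} (G : CFG N)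
    (X : N) (u₀ : List Bool)
    (n m : ℕ) (hnm : n < m) (v w : List Bool)
    (hv : v ∈ G.langN X ∧ ∃ x y : List Bool,
      x ++ [true] <+: u₀ ∧ v = wordPow u₀ n ++ x ++ false :: y)
    (hw : w ∈ G.langN X ∧ ∃ x y : List Bool,
      x ++ [true] <+: u₀ ∧ w = wordPow u₀ m ++ x ++ false :: y) :
    BranchLT v w := by
  obtain ⟨-, x, y, hx, rfl⟩ := hv
  obtain ⟨-, x', y', -, rfl⟩ := hw
  have hprefix : wordPow u₀ n ++ x ++ [true] <+: wordPow u₀ m ++ x' ++ false :: y' := by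
    rw [List.append_assoc, List.append_assoc]
    exact (wordPow_append_prefix_wordPow hx hnm).trans (List.prefix_append _ _)
  exact BranchLT.of_append_singleton_prefix Bool.false_lt_true hprefix

/-- Let X be a recursive nonterminal of an ordinal grammar with pumping root
u₀, and let L(n, X) = { w ∈ L(X) : w = u₀ⁿ·x·0·y with x·1 a prefix of u₀ }.
If n < m, v ∈ L(n, X) and w ∈ L(m, X), then v <ₛ w. -/
theorem stmt18 {N : Type} (G : CFG N)
    (hacc : ∀ X : N, G.Accessible X)
    (hco : ∀ X : N, (G.langN X).Nonempty)
    (hpre : ∀ X : N, IsPrefixLang (G.langN X))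
    (htwo : ∀ X : N, ∃ u v : List Bool, u ∈ G.langN X ∧ v ∈ G.langN X ∧ u ≠ v)
    (hwo : IsWellOrder ↥(G.langN G.start) (subLex (G.langN G.start)))
    (X : N) (u₀ : List Bool)
    (hprim : PrimitiveWord u₀)
    (hroot : ∀ (u : List Bool) (p : List (N ⊕ Bool)), u ≠ [] →
      G.Derives [Sum.inl X] (liftWord u ++ Sum.inl X :: p) →
      ∃ k : ℕ, 1 ≤ k ∧ u = wordPow u₀ k)
    (n m : ℕ) (hnm : n < m) (v w : List Bool)
    (hv : v ∈ G.langN X ∧ ∃ x y : List Bool,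
      x ++ [true] <+: u₀ ∧ v = wordPow u₀ n ++ x ++ false :: y)
    (hw : w ∈ G.langN X ∧ ∃ x y : List Bool,
      x ++ [true] <+: u₀ ∧ w = wordPow u₀ m ++ x ++ false :: y) :
    BranchLT v w :=
  stmt18_general G X u₀ n m hnm v w hv hw
end
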